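/- Let G be a finite group, H ◁ G normal of index 2 with coset representative r, and let D : G → GL(V) be an irreducible complex representation such that the restriction D|_H is reducible. Then V = L₁ ⊕ L₂ with L₁ an irreducible H-subspace, L₂ = D(r)L₁, and with respect to bases [Φ] of L₁ and D(r)[Φ] of L₂, the matrix of D(r) has block form [[0, d(r²)],[I, 0]], where d denotes the representation of H on L₁. -/

import Mathlib

def RepInvariant {G V : Type*} [Group G] [AddCommGroup V] [Module ℂ V]
    (ρ : Representation ℂ G V) (S : Set G) (W : Submodule ℂ V) : Prop :=
  ∀ g ∈ S, ∀ v ∈ W, ρ g v ∈ W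

def RepIrreducibleOn {G V : Type*} [Group G] [AddCommGroup V] [Module ℂ V]
    (ρ : Representation ℂ G V) (S : Set G) : Prop :=
  Nontrivial V ∧ ∀ W : Submodule ℂ V, RepInvariant ρ S W → W = ⊥ ∨ W = ⊤

/-!
Inside a proper nonzero `H`-invariant subspace take a minimal one, `L₁`. As `H` (of index 2) is normal,
`L₂ = D(r)L₁` is `H`-invariant too, and `D(r)L₂ = D(r²)L₁ ⊆ L₁` since `r² ∈ H`; because
`G = H ∪ Hr`, the sum `L₁ + L₂` is `G`-invariant, hence equal to `V`. The intersection is an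
`H`-invariant subspace of `L₁`, so it is `0` unless `L₁ ⊆ L₂`, which would give
`L₂ ⊆ D(r)L₂ ⊆ L₁` and `L₁ = V`. In the basis `Φ, D(r)Φ` the map `D(r)` sends `Φ` to `D(r)Φ`
and `D(r)Φ` to `D(r²)Φ ⊆ L₁`: this is the block form.
-/

section BlockBasis

variable {K V : Type*} [Field K] [AddCommGroup V] [Module K V]

theorem Submodule.exists_basis_sum_of_isCompl_map [FiniteDimensional K V]
    (L : Submodule K V) {f : V →ₗ[K] V} (hf : Function.Injective f)
    (hL : IsCompl L (L.map f)) :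
    ∃ (m : ℕ) (b : Module.Basis (Fin m ⊕ Fin m) K V),
      (∀ i, b (Sum.inl i) ∈ L) ∧ (∀ i, b (Sum.inr i) = f (b (Sum.inl i))) ∧
      ∀ v ∈ L, ∀ i, b.repr v (Sum.inr i) = 0 := by
  let φ := Module.finBasis K L
  let b := (φ.prod (φ.map (L.equivMapOfInjective f hf))).map (L.prodEquivOfIsCompl _ hL)
  refine ⟨_, b, fun i => ?_, fun i => ?_, fun v hv i => ?_⟩
  · simp [b]
  · simp [b]
  · simp [b, Submodule.prodEquivOfIsCompl_symm_apply_left L _ hL ⟨v, hv⟩]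

theorem LinearMap.toMatrix_eq_fromBlocks_zero_one {ι : Type*} [Fintype ι] [DecidableEq ι]
    (b : Module.Basis (ι ⊕ ι) K V) (f g : V →ₗ[K] V)
    (hf : ∀ i, b (Sum.inr i) = f (b (Sum.inl i))) (hfg : f ∘ₗ f = g)
    (hg : ∀ i j, b.repr (g (b (Sum.inl j))) (Sum.inr i) = 0) :
    LinearMap.toMatrix b b f =
      Matrix.fromBlocks 0 (Matrix.of fun i j => LinearMap.toMatrix b b g (Sum.inl i) (Sum.inl j))
        1 0 := by
  ext (i | i) (j | j)
  · simp [LinearMap.toMatrix_apply, ← hf]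
  · simp [LinearMap.toMatrix_apply, hf, ← hfg]
  · simp [LinearMap.toMatrix_apply, ← hf, Matrix.one_apply, Finsupp.single_apply, eq_comm]
  · simpa [LinearMap.toMatrix_apply, hf, ← hfg] using hg i j

end BlockBasis

namespace RepInvariant

variable {G V : Type*} [Group G] [AddCommGroup V] [Module ℂ V] {ρ : Representation ℂ G V}
  {S : Set G} {W : Submodule ℂ V}

theorem sup {W' : Submodule ℂ V} (hW : RepInvariant ρ S W) (hW' : RepInvariant ρ S W') :
    RepInvariant ρ S (W ⊔ W') := by
  intro g hg v hv
  obtain ⟨x, hx, y, hy, rfl⟩ := Submodule.mem_sup.mp hv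
  rw [map_add]
  exact Submodule.add_mem_sup (hW g hg x hx) (hW' g hg y hy)

theorem inf {W' : Submodule ℂ V} (hW : RepInvariant ρ S W) (hW' : RepInvariant ρ S W') :
    RepInvariant ρ S (W ⊓ W') :=
  fun g hg v hv => ⟨hW g hg v hv.1, hW' g hg v hv.2⟩

theorem map_le {g : G} (hg : g ∈ S) (hW : RepInvariant ρ S W) : W.map (ρ g) ≤ W :=
  Submodule.map_le_iff_le_comap.mpr fun v hv => hW g hg v hv

theorem map_of_normal {H : Subgroup G} [H.Normal] (hW : RepInvariant ρ H W) (g : G) :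
    RepInvariant ρ H (W.map (ρ g)) := by
  rintro h hh _ ⟨w, hw, rfl⟩
  refine ⟨ρ (g⁻¹ * h * g) w, hW _ (by simpa using Subgroup.Normal.conj_mem ‹_› h hh g⁻¹) w hw, ?_⟩
  simp [← Module.End.mul_apply, ← map_mul, mul_assoc]

theorem univ_of_index_two {H : Subgroup G} (hH : H.index = 2) {r : G} (hr : r ∉ H)
    (hW : RepInvariant ρ H W) (hrW : W.map (ρ r) ≤ W) : RepInvariant ρ Set.univ W := by
  intro g _ v hv
  by_cases hg : g ∈ H
  · exact hW g hg v hv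
  have hgr : g * r⁻¹ ∈ H := by
    rw [Subgroup.mul_mem_iff_of_index_two hH]
    exact iff_of_false hg (by simpa using hr)
  have : ρ g v = ρ (g * r⁻¹) (ρ r v) := by simp [← Module.End.mul_apply, ← map_mul]
  exact this ▸ hW _ hgr _ (hrW ⟨v, hv, rfl⟩)

end RepInvariant

theorem exists_minimal_repInvariant_le {G V : Type*} [Group G] [AddCommGroup V] [Module ℂ V]
    [FiniteDimensional ℂ V] {ρ : Representation ℂ G V} {S : Set G} {W : Submodule ℂ V}
    (hW : RepInvariant ρ S W) (hW₀ : W ≠ ⊥) :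
    ∃ L ≤ W, RepInvariant ρ S L ∧ L ≠ ⊥ ∧
      ∀ U ≤ L, RepInvariant ρ S U → U = ⊥ ∨ U = L := by
  obtain ⟨L, hLW, ⟨hL, hL₀⟩, hmin⟩ :=
    exists_minimal_le_of_wellFoundedLT (fun U => RepInvariant ρ S U ∧ U ≠ ⊥) W ⟨hW, hW₀⟩
  refine ⟨L, hLW, hL, hL₀, fun U hUL hU => or_iff_not_imp_left.mpr fun hU₀ => ?_⟩
  exact le_antisymm hUL (hmin ⟨hU, hU₀⟩ hUL)

theorem isCompl_map_of_index_two {G V : Type*} [Group G] [AddCommGroup V] [Module ℂ V]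
    {ρ : Representation ℂ G V} (hirr : RepIrreducibleOn ρ Set.univ)
    {H : Subgroup G} (hH : H.index = 2) {r : G} (hr : r ∉ H) {L : Submodule ℂ V}
    (hL : RepInvariant ρ H L) (hL₀ : L ≠ ⊥) (hL_top : L ≠ ⊤)
    (hmin : ∀ U ≤ L, RepInvariant ρ H U → U = ⊥ ∨ U = L) :
    IsCompl L (L.map (ρ r)) := by
  have : H.Normal := Subgroup.normal_of_index_eq_two hH
  have hL₂ : RepInvariant ρ H (L.map (ρ r)) := hL.map_of_normal r
  have hrr : (L.map (ρ r)).map (ρ r) ≤ L := by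
    rw [← Submodule.map_comp, ← Module.End.mul_eq_comp, ← map_mul]
    exact hL.map_le (Subgroup.mul_self_mem_of_index_two hH r)
  have hsup : L ⊔ L.map (ρ r) = ⊤ := by
    refine (hirr.2 _ ((hL.sup hL₂).univ_of_index_two hH hr ?_)).resolve_left
      (ne_bot_of_le_ne_bot hL₀ le_sup_left)
    rw [Submodule.map_sup]
    exact sup_le le_sup_right (hrr.trans le_sup_left)
  refine ⟨disjoint_iff.mpr ((hmin _ inf_le_left (hL.inf hL₂)).resolve_right fun h => ?_),
    codisjoint_iff.mpr hsup⟩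
  have hLL₂ : L ≤ L.map (ρ r) := inf_eq_left.mp h
  exact hL_top (by rw [← hsup, sup_eq_left.mpr ((Submodule.map_mono hLL₂).trans hrr)])

theorem stmt1_general {G V : Type*} [Group G] [AddCommGroup V] [Module ℂ V]
    [FiniteDimensional ℂ V]
    (H : Subgroup G) (hH : H.index = 2)
    (r : G) (hr : r ∉ H)
    (ρ : Representation ℂ G V)
    (hirr : RepIrreducibleOn ρ Set.univ)
    (hred : ∃ W : Submodule ℂ V, RepInvariant ρ (H : Set G) W ∧ W ≠ ⊥ ∧ W ≠ ⊤) :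
    ∃ L₁ : Submodule ℂ V,
      RepInvariant ρ (H : Set G) L₁ ∧ L₁ ≠ ⊥ ∧
      (∀ W : Submodule ℂ V, W ≤ L₁ → RepInvariant ρ (H : Set G) W → W = ⊥ ∨ W = L₁) ∧
      IsCompl L₁ (L₁.map (ρ r)) ∧
      ∃ (m : ℕ) (b : Module.Basis (Fin m ⊕ Fin m) ℂ V),
        (∀ i : Fin m, b (Sum.inl i) ∈ L₁) ∧
        (∀ i : Fin m, b (Sum.inr i) = ρ r (b (Sum.inl i))) ∧
        LinearMap.toMatrix b b (ρ r) =
          Matrix.fromBlocks 0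
            (Matrix.of fun i j =>
              LinearMap.toMatrix b b (ρ (r * r)) (Sum.inl i) (Sum.inl j))
            1 0 := by
  obtain ⟨W, hW, hW₀, hW_top⟩ := hred
  obtain ⟨L, hLW, hL, hL₀, hmin⟩ := exists_minimal_repInvariant_le hW hW₀
  have hcompl := isCompl_map_of_index_two hirr hH hr hL hL₀
    (fun h => hW_top (top_le_iff.mp (h ▸ hLW))) hmin
  obtain ⟨m, b, hbL, hb_inr, hL_repr⟩ :=
    L.exists_basis_sum_of_isCompl_map (ρ.apply_bijective r).injective hcompl
  refine ⟨L, hL, hL₀, hmin, hcompl, m, b, hbL, hb_inr, ?_⟩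
  exact LinearMap.toMatrix_eq_fromBlocks_zero_one b _ _ hb_inr (map_mul ρ r r).symm
    fun i j => hL_repr _ (hL _ (Subgroup.mul_self_mem_of_index_two hH r) _ (hbL j)) i

/-- If `D` is irreducible on `G` but its restriction to the index-2 normal subgroup `H` is
reducible, then `V = L₁ ⊕ L₂` with `L₁` an irreducible `H`-subspace, `L₂ = D(r)L₁`, and in
the basis `[Φ, D(r)Φ]` the matrix of `D(r)` is `[[0, d(r²)],[I, 0]]`, where `d(r²)` is the
block of the matrix of `D(r²)` on `L₁`. -/
theorem stmt1 {G V : Type*} [Group G] [Finite G] [AddCommGroup V] [Module ℂ V]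
    [FiniteDimensional ℂ V]
    (H : Subgroup G) [H.Normal] (hH : H.index = 2)
    (r : G) (hr : r ∉ H)
    (ρ : Representation ℂ G V)
    (hirr : RepIrreducibleOn ρ Set.univ)
    (hred : ∃ W : Submodule ℂ V, RepInvariant ρ (H : Set G) W ∧ W ≠ ⊥ ∧ W ≠ ⊤) :
    ∃ L₁ : Submodule ℂ V,
      RepInvariant ρ (H : Set G) L₁ ∧ L₁ ≠ ⊥ ∧
      (∀ W : Submodule ℂ V, W ≤ L₁ → RepInvariant ρ (H : Set G) W → W = ⊥ ∨ W = L₁) ∧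
      IsCompl L₁ (L₁.map (ρ r)) ∧
      ∃ (m : ℕ) (b : Module.Basis (Fin m ⊕ Fin m) ℂ V),
        (∀ i : Fin m, b (Sum.inl i) ∈ L₁) ∧
        (∀ i : Fin m, b (Sum.inr i) = ρ r (b (Sum.inl i))) ∧
        LinearMap.toMatrix b b (ρ r) =
          Matrix.fromBlocks 0
            (Matrix.of fun i j =>
              LinearMap.toMatrix b b (ρ (r * r)) (Sum.inl i) (Sum.inl j))
            1 0 :=
  stmt1_general H hH r hr ρ hirr hred
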